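/- Let p(x,y,z,a,b) = (1−xz)(1−yz)/(1−xy) − a·(x−z)(1−yz)/(x−y) + b·(1−xz)(y−z)/(x−y) − ab·(x−z)(y−z)/(1−xy), and define the (n+1)×(n+1) matrix C with C_{i,j} = p(x_i,y_j,z,a_i,b_j) for i,j ≤ n, C_{i,n+1} = 1 − a_i, C_{n+1,j} = 1 − b_j, and C_{n+1,n+1} = (1−c)/(1−z²). Define the (2n+1)×(2n+1) matrix V by V_{i,j} = x_i^{j−1} − a_i x_i^{2n+1−j} for i ≤ n, V_{i,j} = y_{i−n}^{j−1} − b_{i−n} y_{i−n}^{2n+1−j} for n < i ≤ 2n, and V_{2n+1,j} = z^{j−1} − c·z^{2n+1−j}. Then det C = (−1)^n · det V / ( (1 − z²) ∏_{i,j} (x_i − y_j)(1 − x_i y_j) ). -/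

import Mathlib

/-!
Each row of `V` is the functional `Q ↦ Q(t) - d · Q^*(t)`, with `Q^* = X^{2n} Q(1/X)`, on
polynomials of degree `≤ 2n`, for `(t, d) = (x_i, a_i), (y_j, b_j), (z, c)`. Let `T` be the
coefficient matrix of the basis `H_j, f, G_k`, where `f = ∏_k (X - y_k)(1 - y_k X)`,
`G_k = (X - z)(1 - zX) f / ((X - y_k)(1 - y_k X))` and
`H_j = (1 - zX) ℓ_j f / ((X - y_j)(1 - y_j X))` with `ℓ_j` linear and chosen so that
`H_j(y_j) = b_j H_j^*(y_j)`. Then `V T` is block triangular: the `y`-rows vanish on `H_j, f` and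
are diagonal on `G_k`, and the other diagonal block is `C` with its denominators cleared.
Replacing the `x`-rows by `(y_m^{2n-k})_k` and `c` by `0` gives a matrix `W` for which `W T` is
just as explicit, while `det W` is a projective Vandermonde determinant after a row operation.
So `det V · det (W T) = det (V T) · det W` proves the theorem once a factor that is nonzero for
generic `y, b, z` is cancelled: first over `ℤ[x, y, a, b, z, c]`, then everywhere by
specialization.
-/

/-- The rational function `p(x,y,z,a,b)` of Okada's Lemma 3.2. -/
noncomputable def pfun {K : Type*} [Field K] (x y z a b : K) : K :=
  (1 - x * z) * (1 - y * z) / (1 - x * y)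
    - a * ((x - z) * (1 - y * z) / (x - y))
    + b * ((1 - x * z) * (y - z) / (x - y))
    - a * b * ((x - z) * (y - z) / (1 - x * y))

open Polynomial Finset Matrix

noncomputable section

namespace Okada

section Reflect

variable {R : Type*} [CommRing R]

def ReflectsTo (N : ℕ) (p q : R[X]) : Prop := p.natDegree ≤ N ∧ p.reflect N = q

namespace ReflectsTo

variable {N M : ℕ} {p p' q q' : R[X]}

lemma mul (hp : ReflectsTo N p p') (hq : ReflectsTo M q q') :
    ReflectsTo (N + M) (p * q) (p' * q') :=
  ⟨natDegree_mul_le.trans (add_le_add hp.1 hq.1), by rw [reflect_mul p q hp.1 hq.1, hp.2, hq.2]⟩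

lemma add (hp : ReflectsTo N p p') (hq : ReflectsTo N q q') :
    ReflectsTo N (p + q) (p' + q') :=
  ⟨natDegree_add_le_of_degree_le hp.1 hq.1, by rw [reflect_add, hp.2, hq.2]⟩

lemma C_mul (r : R) (hp : ReflectsTo N p p') : ReflectsTo N (C r * p) (C r * p') :=
  ⟨(natDegree_C_mul_le r p).trans hp.1, by rw [reflect_C_mul, hp.2]⟩

lemma prod {ι : Type*} {s : Finset ι} {p q : ι → R[X]} {d : ι → ℕ}
    (h : ∀ i ∈ s, ReflectsTo (d i) (p i) (q i)) :
    ReflectsTo (∑ i ∈ s, d i) (∏ i ∈ s, p i) (∏ i ∈ s, q i) := by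
  classical
  induction s using Finset.induction_on with
  | empty => exact ⟨by simp, by simp [reflect_one]⟩
  | insert a s ha ih =>
    rw [sum_insert ha, prod_insert ha, prod_insert ha]
    exact (h a (mem_insert_self a s)).mul (ih fun i hi => h i (mem_insert_of_mem hi))

end ReflectsTo

lemma reflectsTo_X_sub_C (u : R) : ReflectsTo 1 (X - C u) (1 - C u * X) := by
  refine ⟨natDegree_X_sub_C_le u, ?_⟩
  rw [reflect_sub, reflect_one_X, reflect_C]
  ring

lemma reflectsTo_one_sub_C_mul_X (u : R) : ReflectsTo 1 (1 - C u * X) (X - C u) := by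
  have h := reflectsTo_X_sub_C u
  refine ⟨?_, by rw [← h.2, reflect_reflect]⟩
  rw [← h.2]
  exact natDegree_reflect_le.trans (max_le le_rfl h.1)

lemma sum_pow_mul_coeff_eq_eval {p : R[X]} {N : ℕ} (hp : p.natDegree ≤ N) (t : R) :
    ∑ k : Fin (N + 1), t ^ (k : ℕ) * p.coeff k = p.eval t := by
  rw [Fin.sum_univ_eq_sum_range (fun k => t ^ k * p.coeff k),
    eval_eq_sum_range' (Nat.lt_succ_of_le hp)]
  simp_rw [mul_comm]

lemma sum_pow_sub_mul_coeff_eq_eval_reflect {p : R[X]} {N : ℕ} (hp : p.natDegree ≤ N) (t : R) :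
    ∑ k : Fin (N + 1), t ^ (N - k) * p.coeff k = (p.reflect N).eval t := by
  rw [eval_eq_sum_range' (Nat.lt_succ_of_le (natDegree_reflect_le.trans (max_le le_rfl hp))),
    Fin.sum_univ_eq_sum_range (fun k => t ^ (N - k) * p.coeff k), ← sum_range_reflect]
  refine sum_congr rfl fun k hk => ?_
  rw [mem_range] at hk
  rw [coeff_reflect, revAt_le (by omega), mul_comm]
  congr 2
  omega

end Reflect

section RowMatrices

variable {R : Type*} [CommRing R] {ι : Type*}

def coeffMatrix (N : ℕ) (Q : ι → R[X]) : Matrix (Fin (N + 1)) ι R :=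
  of fun k q => (Q q).coeff k

def evalSubReflectMatrix (N : ℕ) (t α β : ι → R) : Matrix ι (Fin (N + 1)) R :=
  of fun r k => α r * t r ^ (k : ℕ) - β r * t r ^ (N - k)

lemma evalSubReflectMatrix_mul_coeffMatrix [Fintype ι] {N : ℕ} {Q Q' : ι → R[X]}
    (hQ : ∀ q, ReflectsTo N (Q q) (Q' q)) (t α β : ι → R) (r q : ι) :
    (evalSubReflectMatrix N t α β * coeffMatrix N Q) r q
      = α r * (Q q).eval (t r) - β r * (Q' q).eval (t r) := by
  simp only [evalSubReflectMatrix, coeffMatrix, mul_apply, of_apply, sub_mul, sum_sub_distrib,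
    mul_assoc, ← mul_sum, sum_pow_mul_coeff_eq_eval (hQ q).1,
    sum_pow_sub_mul_coeff_eq_eval_reflect (hQ q).1, (hQ q).2]

end RowMatrices

section Determinants

variable {R : Type*} [CommRing R]

lemma det_submatrix_mul_det_mul {m ι : Type*} [Fintype m] [DecidableEq m] [Fintype ι]
    [DecidableEq ι] (A W : Matrix ι m R) (T : Matrix m ι R) (e : m ≃ ι) :
    (A.submatrix e id).det * (W * T).det = (A * T).det * (W.submatrix e id).det := by
  have key (M : Matrix ι m R) :
      (M * T).det = (M.submatrix e id).det * (T.submatrix id e).det := by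
    rw [← det_mul, ← det_submatrix_equiv_self e (M * T),
      submatrix_mul _ _ _ _ _ Function.bijective_id]
  rw [key A, key W]
  ring

lemma det_submatrix_fromRows_add_mul {α β m : Type*} [Fintype α] [Fintype β] [DecidableEq α]
    [DecidableEq β] [Fintype m] [DecidableEq m] (A : Matrix α m R) (B : Matrix β m R)
    (L : Matrix β α R) (e : m ≃ α ⊕ β) :
    ((fromRows A (B + L * A)).submatrix e id).det = ((fromRows A B).submatrix e id).det := by
  have h : fromRows A (B + L * A)
      = (fromBlocks 1 0 L 1 : Matrix (α ⊕ β) (α ⊕ β) R) * fromRows A B := by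
    rw [fromBlocks_mul_fromRows]
    simp [add_comm]
  rw [h, submatrix_mul _ _ _ _ _ e.bijective, det_mul, det_submatrix_equiv_self,
    det_fromBlocks_zero₁₂, det_one, det_one, one_mul, one_mul]

lemma det_eq_det_toBlocks₁₁_mul_det_toBlocks₂₂ {α β : Type*} [Fintype α] [Fintype β]
    [DecidableEq α] [DecidableEq β] (M : Matrix (α ⊕ β) (α ⊕ β) R) (h : M.toBlocks₂₁ = 0) :
    M.det = M.toBlocks₁₁.det * M.toBlocks₂₂.det := by
  have := det_fromBlocks_zero₂₁ M.toBlocks₁₁ M.toBlocks₁₂ M.toBlocks₂₂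
  rwa [← h, fromBlocks_toBlocks] at this

lemma prod_Ioi_fin_add {M : Type*} [CommMonoid M] {m n : ℕ}
    (f : Fin (m + n) → Fin (m + n) → M) :
    ∏ i, ∏ j ∈ Ioi i, f i j
      = (∏ i : Fin m, ∏ j ∈ Ioi i, f (Fin.castAdd n i) (Fin.castAdd n j))
        * (∏ i : Fin m, ∏ j : Fin n, f (Fin.castAdd n i) (Fin.natAdd m j))
        * ∏ i : Fin n, ∏ j ∈ Ioi i, f (Fin.natAdd m i) (Fin.natAdd m j) := by
  have h₁ (i : Fin n) (j : Fin m) : ¬ m + (i : ℕ) < j := by omega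
  have h₂ (i : Fin m) (j : Fin n) : (i : ℕ) < m + j := by omega
  simp only [← filter_lt_eq_Ioi, prod_filter, Fin.prod_univ_add, prod_mul_distrib, Fin.lt_def,
    Fin.val_castAdd, Fin.val_natAdd, h₁, h₂, Nat.add_lt_add_iff_left, if_true, if_false,
    prod_const_one, mul_one, mul_assoc]

lemma prod_prod_erase_eq_mul_prod_Ioi {M : Type*} [CommMonoid M] {n : ℕ}
    (g : Fin n → Fin n → M) :
    ∏ m, ∏ k ∈ univ.erase m, g m k = (∏ m, ∏ k ∈ Ioi m, g m k) * ∏ m, ∏ k ∈ Ioi m, g k m := by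
  have h (m : Fin n) : univ.erase m = (Ioi m).disjUnion (Iio m) (disjoint_Ioi_Iio m) := by
    rw [Ioi_disjUnion_Iio, compl_eq_univ_sdiff, sdiff_singleton_eq_erase]
  simp_rw [h, prod_disjUnion, prod_mul_distrib]
  congr 1
  exact prod_comm' fun m k => by simp [and_comm]

lemma det_projVandermonde_append {m n : ℕ} (v w : Fin m → R) (v' w' : Fin n → R) :
    (projVandermonde (Fin.append v v') (Fin.append w w')).det
      = (projVandermonde v w).det * (projVandermonde v' w').det
        * ∏ i, ∏ j, (v' j * w i - v i * w' j) := by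
  simp only [det_projVandermonde, prod_Ioi_fin_add, Fin.append_left, Fin.append_right]
  ring

lemma det_projVandermonde_comp_cast {m n : ℕ} (h : m = n) (v w : Fin n → R) :
    (projVandermonde (v ∘ Fin.cast h) (w ∘ Fin.cast h)).det = (projVandermonde v w).det := by
  subst h
  rfl

lemma det_projVandermonde_fin_one (v w : Fin 1 → R) : (projVandermonde v w).det = 1 := by
  rw [det_projVandermonde]
  simp

end Determinants

section InterpolationBasis

variable {R : Type*} [CommRing R] {n : ℕ} (y b : Fin n → R) (z : R)

def pairPoly (u : R) : R[X] := (X - C u) * (1 - C u * X)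

lemma reflectsTo_pairPoly (u : R) : ReflectsTo 2 (pairPoly u) (pairPoly u) := by
  have h := (reflectsTo_X_sub_C u).mul (reflectsTo_one_sub_C_mul_X u)
  rwa [mul_comm (1 - C u * X)] at h

lemma eval_pairPoly (u t : R) : (pairPoly u).eval t = (t - u) * (1 - u * t) := by
  simp [pairPoly]

def pairProd : R[X] := ∏ k, pairPoly (y k)

def pairProdErase (j : Fin n) : R[X] := ∏ k ∈ univ.erase j, pairPoly (y k)

lemma pairProd_eq (j : Fin n) : pairProd y = pairPoly (y j) * pairProdErase y j :=
  (mul_prod_erase _ _ (mem_univ j)).symm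

lemma reflectsTo_pairProd : ReflectsTo (2 * n) (pairProd y) (pairProd y) := by
  have h := ReflectsTo.prod (s := univ) (d := fun _ => 2) fun k _ => reflectsTo_pairPoly (y k)
  rwa [sum_const, card_univ, Fintype.card_fin, smul_eq_mul, mul_comm] at h

lemma reflectsTo_pairProdErase (j : Fin n) :
    ReflectsTo (2 * (n - 1)) (pairProdErase y j) (pairProdErase y j) := by
  have h := ReflectsTo.prod (s := univ.erase j) (d := fun _ => 2)
    fun k _ => reflectsTo_pairPoly (y k)
  rwa [sum_const, card_erase_of_mem (mem_univ j), card_univ, Fintype.card_fin, smul_eq_mul,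
    mul_comm] at h

lemma eval_pairProd (t : R) : (pairProd y).eval t = ∏ k, (t - y k) * (1 - y k * t) := by
  simp [pairProd, eval_prod, eval_pairPoly]

lemma eval_pairProdErase (j : Fin n) (t : R) :
    (pairProdErase y j).eval t = ∏ k ∈ univ.erase j, (t - y k) * (1 - y k * t) := by
  simp [pairProdErase, eval_prod, eval_pairPoly]

lemma eval_pairProd_self (m : Fin n) : (pairProd y).eval (y m) = 0 := by
  rw [pairProd_eq y m, eval_mul, eval_pairPoly, sub_self, zero_mul, zero_mul]

lemma eval_pairProdErase_of_ne {m j : Fin n} (h : m ≠ j) :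
    (pairProdErase y j).eval (y m) = 0 := by
  rw [eval_pairProdErase]
  exact prod_eq_zero (mem_erase.2 ⟨h, mem_univ m⟩) (by ring)

def quadPoly (j : Fin n) : R[X] :=
  (1 - C z * X) * (C (1 - y j * z) * (X - C (y j)) + C (b j * (y j - z)) * (1 - C (y j) * X))

def quadPolyReflect (j : Fin n) : R[X] :=
  (X - C z) * (C (1 - y j * z) * (1 - C (y j) * X) + C (b j * (y j - z)) * (X - C (y j)))

lemma reflectsTo_quadPoly (j : Fin n) :
    ReflectsTo 2 (quadPoly y b z j) (quadPolyReflect y b z j) :=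
  (reflectsTo_one_sub_C_mul_X z).mul
    (((reflectsTo_X_sub_C (y j)).C_mul _).add ((reflectsTo_one_sub_C_mul_X (y j)).C_mul _))

/-- Indexes rows (`x_i`, then `z`, then `y_m`) and columns (`H_j`, then `f`, then `G_k`). -/
abbrev Idx (n : ℕ) := (Fin n ⊕ Fin 1) ⊕ Fin n

def colPoly : Idx n → R[X] :=
  Sum.elim (Sum.elim (fun j => quadPoly y b z j * pairProdErase y j) fun _ => pairProd y)
    fun k => pairPoly z * pairProdErase y k

def colPolyReflect : Idx n → R[X] :=
  Sum.elim (Sum.elim (fun j => quadPolyReflect y b z j * pairProdErase y j) fun _ => pairProd y)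
    fun k => pairPoly z * pairProdErase y k

lemma reflectsTo_colPoly (q : Idx n) :
    ReflectsTo (2 * n) (colPoly y b z q) (colPolyReflect y b z q) := by
  rcases q with (j | _) | k
  · have h := (reflectsTo_quadPoly y b z j).mul (reflectsTo_pairProdErase y j)
    rwa [show 2 + 2 * (n - 1) = 2 * n by have := j.pos; omega] at h
  · exact reflectsTo_pairProd y
  · have h := (reflectsTo_pairPoly z).mul (reflectsTo_pairProdErase y k)
    rwa [show 2 + 2 * (n - 1) = 2 * n by have := k.pos; omega] at h

lemma colPoly_inl_inr (u : Fin 1) : colPoly y b z (.inl (.inr u)) = pairProd y := by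
  simp only [colPoly, Sum.elim_inl, Sum.elim_inr]

lemma colPolyReflect_inl_inr (u : Fin 1) : colPolyReflect y b z (.inl (.inr u)) = pairProd y := by
  simp only [colPolyReflect, Sum.elim_inl, Sum.elim_inr]

lemma colPolyReflect_inr (k : Fin n) :
    colPolyReflect y b z (.inr k) = colPoly y b z (.inr k) := by
  simp only [colPoly, colPolyReflect, Sum.elim_inr]

end InterpolationBasis

section Evaluations

/-- The numerator of `pfun x y z a b` over the denominator `(x - y)(1 - x y)`. -/
def pfunNum {R : Type*} [CommRing R] (x y z a b : R) : R :=
  (1 - x * z) * (1 - y * z) * (x - y) - a * ((x - z) * (1 - y * z) * (1 - x * y))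
    + b * ((1 - x * z) * (y - z) * (1 - x * y)) - a * b * ((x - z) * (y - z) * (x - y))

variable {R : Type*} [CommRing R] {n : ℕ} (y b : Fin n → R) (z : R)

def sepProd (m : Fin n) : R := ∏ k ∈ univ.erase m, (y m - y k) * (1 - y k * y m)

def diagW (m : Fin n) : R := (y m - z) * (1 - y m * z) * (1 - y m * y m) * sepProd y m

def diagG (m : Fin n) : R := (y m - z) * (1 - z * y m) * sepProd y m

lemma eval_colPoly_sub_mul_eval_colPolyReflect (t d : R) (j : Fin n) :
    (colPoly y b z (.inl (.inl j))).eval t - d * (colPolyReflect y b z (.inl (.inl j))).eval t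
      = pfunNum t (y j) z d (b j) * (pairProdErase y j).eval t := by
  simp only [colPoly, colPolyReflect, Sum.elim_inl, quadPoly, quadPolyReflect, eval_mul, eval_add,
    eval_sub, eval_one, eval_C, eval_X, pfunNum]
  ring

lemma eval_colPoly_z (j : Fin n) :
    (colPoly y b z (.inl (.inl j))).eval z = (1 - z ^ 2) * (1 - b j) * (pairProd y).eval z := by
  simp only [colPoly, Sum.elim_inl, quadPoly, pairProd_eq y j, eval_mul, eval_add, eval_sub,
    eval_one, eval_C, eval_X, eval_pairPoly]
  ring

lemma eval_colPolyReflect_z (j : Fin n) :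
    (colPolyReflect y b z (.inl (.inl j))).eval z = 0 := by
  simp [colPolyReflect, quadPolyReflect]

lemma eval_colPolyReflect_y (m j : Fin n) :
    (colPolyReflect y b z (.inl (.inl j))).eval (y m) = if m = j then diagW y z m else 0 := by
  split_ifs with h
  · subst h
    simp only [colPolyReflect, Sum.elim_inl, quadPolyReflect, eval_mul, eval_add, eval_sub,
      eval_one, eval_C, eval_X, eval_pairProdErase, diagW, sepProd]
    ring
  · simp [colPolyReflect, eval_pairProdErase_of_ne y h]

lemma eval_colPoly_y_sub_mul_eval_colPolyReflect_y (m : Fin n) (q : Fin n ⊕ Fin 1) :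
    (colPoly y b z (.inl q)).eval (y m) - b m * (colPolyReflect y b z (.inl q)).eval (y m) = 0 := by
  rcases q with j | _
  · rw [eval_colPoly_sub_mul_eval_colPolyReflect]
    rcases eq_or_ne m j with rfl | h
    · rw [pfunNum]
      ring
    · rw [eval_pairProdErase_of_ne y h, mul_zero]
  · simp [colPoly_inl_inr, colPolyReflect_inl_inr, eval_pairProd_self]

lemma eval_colPoly_inr_y (m k : Fin n) :
    (colPoly y b z (.inr k)).eval (y m) = if m = k then diagG y z m else 0 := by
  split_ifs with h
  · subst h
    simp [colPoly, eval_pairPoly, eval_pairProdErase, diagG, sepProd, mul_assoc]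
  · simp [colPoly, eval_pairProdErase_of_ne y h]

end Evaluations

section Blocks

variable {R : Type*} [CommRing R] {n : ℕ} (x y a b : Fin n → R) (z c : R)

/-- `C` with row `i` multiplied by `∏_k (x_i - y_k)(1 - y_k x_i)` and its last row by `1 - z²`. -/
def clearedC : Matrix (Fin n ⊕ Fin 1) (Fin n ⊕ Fin 1) R :=
  fromBlocks
    (of fun i j => pfunNum (x i) (y j) z (a i) (b j)
      * ∏ k ∈ univ.erase j, (x i - y k) * (1 - y k * x i))
    (of fun i _ => (1 - a i) * ∏ k, (x i - y k) * (1 - y k * x i))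
    (of fun _ j => (1 - z ^ 2) * (1 - b j))
    (of fun _ _ => 1 - c)

def colMatrix : Matrix (Fin (2 * n + 1)) (Idx n) R := coeffMatrix (2 * n) (colPoly y b z)

def rowsMatrix (t α β : Fin n ⊕ Fin 1 → R) : Matrix (Idx n) (Fin (2 * n + 1)) R :=
  evalSubReflectMatrix (2 * n) (Sum.elim t y) (Sum.elim α 1) (Sum.elim β b)

def vRows : Matrix (Idx n) (Fin (2 * n + 1)) R :=
  rowsMatrix y b (Sum.elim x fun _ => z) 1 (Sum.elim a fun _ => c)

-- Rows `y_m^{2n-k}`, then `z^k`, then the `y`-rows of `vRows`.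
def wRows : Matrix (Idx n) (Fin (2 * n + 1)) R :=
  rowsMatrix y b (Sum.elim y fun _ => z) (Sum.elim 0 1) (Sum.elim (-1) 0)

lemma rowsMatrix_mul_colMatrix (t α β : Fin n ⊕ Fin 1 → R) (r q : Idx n) :
    (rowsMatrix y b t α β * colMatrix y b z) r q
      = Sum.elim α 1 r * (colPoly y b z q).eval (Sum.elim t y r)
        - Sum.elim β b r * (colPolyReflect y b z q).eval (Sum.elim t y r) :=
  evalSubReflectMatrix_mul_coeffMatrix (reflectsTo_colPoly y b z) _ _ _ r q

lemma det_rowsMatrix_mul_colMatrix (t α β : Fin n ⊕ Fin 1 → R) :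
    (rowsMatrix y b t α β * colMatrix y b z).det
      = (rowsMatrix y b t α β * colMatrix y b z).toBlocks₁₁.det
        * ∏ m, (1 - b m) * diagG y z m := by
  rw [det_eq_det_toBlocks₁₁_mul_det_toBlocks₂₂, ← det_diagonal]
  · congr 2
    ext m k
    simp only [toBlocks₂₂, of_apply, rowsMatrix_mul_colMatrix, Sum.elim_inr, Pi.one_apply,
      colPolyReflect_inr, eval_colPoly_inr_y, diagonal_apply]
    split_ifs <;> ring
  · ext m q
    simp only [toBlocks₂₁, of_apply, rowsMatrix_mul_colMatrix, Sum.elim_inr, Pi.one_apply,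
      one_mul, eval_colPoly_y_sub_mul_eval_colPolyReflect_y, Matrix.zero_apply]

lemma det_vRows_mul_colMatrix :
    (vRows x y a b z c * colMatrix y b z).det
      = (pairProd y).eval z * (clearedC x y a b z c).det * ∏ m, (1 - b m) * diagG y z m := by
  have h : (vRows x y a b z c * colMatrix y b z).toBlocks₁₁
      = of fun p q => Sum.elim (fun _ => 1) (fun _ => (pairProd y).eval z) p
          * clearedC x y a b z c p q := by
    ext (i | _) (j | _) <;>
      simp [vRows, toBlocks₁₁, rowsMatrix_mul_colMatrix, clearedC,
        eval_colPoly_sub_mul_eval_colPolyReflect, eval_colPoly_z, colPoly_inl_inr,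
        colPolyReflect_inl_inr, eval_colPolyReflect_z, eval_pairProdErase, eval_pairProd] <;>
      ring
  rw [vRows, det_rowsMatrix_mul_colMatrix, ← vRows, h, det_mul_column, Fintype.prod_sum_type]
  simp

lemma det_wRows_mul_colMatrix :
    (wRows y b z * colMatrix y b z).det
      = (∏ m, diagW y z m) * (pairProd y).eval z * ∏ m, (1 - b m) * diagG y z m := by
  have h : (wRows y b z * colMatrix y b z).toBlocks₁₁
      = fromBlocks (diagonal (diagW y z)) 0
          (of fun _ j => (1 - z ^ 2) * (1 - b j) * (pairProd y).eval z)
          (of fun _ _ => (pairProd y).eval z) := by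
    ext (m | _) (j | _) <;>
      simp [wRows, toBlocks₁₁, rowsMatrix_mul_colMatrix, eval_colPolyReflect_y, eval_colPoly_z,
        diagonal_apply, colPoly_inl_inr, colPolyReflect_inl_inr, eval_pairProd_self,
        eval_colPolyReflect_z, neg_ite]
  rw [wRows, det_rowsMatrix_mul_colMatrix, ← wRows, h, det_fromBlocks_zero₁₂, det_diagonal,
    det_unique, of_apply]

end Blocks

section Reindexing

def idxEquiv (n : ℕ) : Fin (n + n + 1) ≃ Idx n :=
  finSumFinEquiv.symm.trans <| (Equiv.sumCongr finSumFinEquiv.symm (Equiv.refl _)).trans <|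
    (Equiv.sumAssoc _ _ _).trans <|
      (Equiv.sumCongr (Equiv.refl _) (Equiv.sumComm _ _)).trans (Equiv.sumAssoc _ _ _).symm

def rowEquiv (n : ℕ) : Fin (2 * n + 1) ≃ Idx n := (finCongr (by omega)).trans (idxEquiv n)

variable {n : ℕ}

lemma rowEquiv_apply (i : Fin (2 * n + 1)) : rowEquiv n i = idxEquiv n (Fin.cast (by omega) i) :=
  rfl

lemma val_rowEquiv_symm_inl_inl (i : Fin n) : ((rowEquiv n).symm (.inl (.inl i)) : ℕ) = i := by
  simp [rowEquiv, idxEquiv]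

lemma val_rowEquiv_symm_inl_inr (u : Fin 1) : ((rowEquiv n).symm (.inl (.inr u)) : ℕ) = 2 * n := by
  simp [rowEquiv, idxEquiv, Subsingleton.elim u 0]

lemma val_rowEquiv_symm_inr (m : Fin n) : ((rowEquiv n).symm (.inr m) : ℕ) = n + m := by
  simp [rowEquiv, idxEquiv, -Fin.natAdd_eq_addNat]

lemma comp_idxEquiv {α : Type*} (v : Idx n → α) :
    v ∘ idxEquiv n = Fin.append (Fin.append (fun i => v (.inl (.inl i))) fun m => v (.inr m))
      fun u => v (.inl (.inr u)) := by
  funext i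
  refine Fin.addCases (fun i => Fin.addCases (fun i => ?_) (fun i => ?_) i) (fun i => ?_) i <;>
    simp [idxEquiv, -Fin.natAdd_eq_addNat]

end Reindexing

section Vandermonde

variable {R : Type*} [CommRing R] {n : ℕ} (y b : Fin n → R) (z : R)

lemma det_wRows_submatrix_eq :
    ((wRows y b z).submatrix (rowEquiv n) id).det
      = ((wRows y 0 z).submatrix (rowEquiv n) id).det := by
  have h : wRows y b z = fromRows (wRows y 0 z).toRows₁ ((wRows y 0 z).toRows₂
      + (fromCols (-diagonal b) 0 : Matrix (Fin n) (Fin n ⊕ Fin 1) R) * (wRows y 0 z).toRows₁) := by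
    ext ((m | u) | m) k <;>
      simp [wRows, rowsMatrix, evalSubReflectMatrix, fromCols, mul_apply, toRows₁, toRows₂,
        Fintype.sum_sum_type, diagonal_apply, sub_eq_add_neg]
  rw [h, det_submatrix_fromRows_add_mul, fromRows_toRows]

-- The left side is the projective Vandermonde product of the points `(1 : y_i)`, `(y_m : 1)`,
-- `(z : 1)`.
lemma prod_vandermonde_eq :
    (∏ i, ∏ j ∈ Ioi i, (y i - y j)) * (∏ i, ∏ j ∈ Ioi i, (y j - y i)) * (∏ i, ∏ j, (y j * y i - 1))
        * ((∏ i, (z * y i - 1)) * ∏ i, (z - y i))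
      = (-1) ^ n * ∏ m, diagW y z m := by
  have hsign : ((-1 : R) ^ n) ^ n = (-1) ^ n := by
    rcases Nat.even_or_odd n with h | h <;> simp [h.neg_one_pow]
  have hsq : (-1 : R) ^ n * (-1) ^ n = 1 := by rw [← mul_pow]; norm_num
  have hdiag (m : Fin n) : (1 - y m * y m) * ∏ k ∈ univ.erase m, (1 - y k * y m)
      = ∏ k, (1 - y k * y m) :=
    mul_prod_erase univ (fun k => 1 - y k * y m) (mem_univ m)
  have hrhs : ∏ m, diagW y z m
      = (∏ m, (y m - z)) * (∏ m, (1 - y m * z)) * (∏ m, ∏ k, (1 - y k * y m))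
        * ∏ m, ∏ k ∈ univ.erase m, (y m - y k) := by
    simp_rw [← hdiag, diagW, sepProd, prod_mul_distrib]
    ring
  simp_rw [hrhs, prod_prod_erase_eq_mul_prod_Ioi,
    show ∀ v : R, z * v - 1 = -(1 - v * z) by intros; ring,
    show ∀ u v : R, u * v - 1 = -(1 - u * v) by intros; ring,
    show ∀ v : R, z - v = -(v - z) by intros; ring, prod_neg, card_univ, Fintype.card_fin,
    prod_mul_distrib, prod_const, card_univ, Fintype.card_fin, hsign]
  linear_combination (-1) ^ n * (∏ i, ∏ j ∈ Ioi i, (y i - y j)) * (∏ i, ∏ j ∈ Ioi i, (y j - y i))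
    * (∏ m, ∏ k, (1 - y k * y m)) * (∏ m, (1 - y m * z)) * (∏ m, (y m - z)) * hsq

lemma det_wRows_zero_submatrix :
    ((wRows y 0 z).submatrix (rowEquiv n) id).det = (-1) ^ n * ∏ m, diagW y z m := by
  have h : (wRows y 0 z).submatrix (rowEquiv n) id
      = projVandermonde (Sum.elim (Sum.elim 1 fun _ => z) y ∘ idxEquiv n ∘ Fin.cast (by omega))
          (Sum.elim (Sum.elim y 1) 1 ∘ idxEquiv n ∘ Fin.cast (by omega)) := by
    ext i k
    simp only [submatrix_apply, id, projVandermonde, rectVandermonde, of_apply,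
      Function.comp_apply, rowEquiv_apply]
    generalize idxEquiv n (Fin.cast _ i) = r
    rcases r with (m | u) | m <;> simp [wRows, rowsMatrix, evalSubReflectMatrix, Fin.val_rev]
  rw [h, ← Function.comp_assoc, ← Function.comp_assoc, det_projVandermonde_comp_cast,
    comp_idxEquiv, comp_idxEquiv, det_projVandermonde_append, det_projVandermonde_append,
    det_projVandermonde_fin_one]
  simp only [det_projVandermonde, Fin.prod_univ_add, Fin.append_left, Fin.append_right,
    Sum.elim_inl, Sum.elim_inr, Pi.one_apply, mul_one, one_mul, prod_const, card_univ,
    Fintype.card_fin, pow_one]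
  exact prod_vandermonde_eq y z

end Vandermonde

section Identity

variable {R : Type*} [CommRing R] {n : ℕ} (x y a b : Fin n → R) (z c : R)

def okadaV : Matrix (Fin (2 * n + 1)) (Fin (2 * n + 1)) R :=
  (vRows x y a b z c).submatrix (rowEquiv n) id

def okadaFactor : R := (∏ m, diagW y z m) * (pairProd y).eval z * ∏ m, (1 - b m) * diagG y z m

lemma det_okadaV_mul_okadaFactor :
    (okadaV x y a b z c).det * okadaFactor y b z
      = (-1) ^ n * (clearedC x y a b z c).det * okadaFactor y b z := by
  have key := det_submatrix_mul_det_mul (vRows x y a b z c) (wRows y b z) (colMatrix y b z)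
    (rowEquiv n)
  rw [← okadaV, det_wRows_submatrix_eq, det_wRows_zero_submatrix, det_vRows_mul_colMatrix,
    det_wRows_mul_colMatrix] at key
  rw [okadaFactor]
  linear_combination key

end Identity

section Specialization

variable {R S : Type*} [CommRing R] [CommRing S] {n : ℕ}

lemma map_okadaV (φ : R →+* S) (x y a b : Fin n → R) (z c : R) :
    (okadaV x y a b z c).map φ = okadaV (φ ∘ x) (φ ∘ y) (φ ∘ a) (φ ∘ b) (φ z) (φ c) := by
  ext i j
  simp only [okadaV, vRows, rowsMatrix, evalSubReflectMatrix, map_apply, submatrix_apply, of_apply,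
    id]
  rcases rowEquiv n i with (i | u) | m <;> simp

lemma map_clearedC (φ : R →+* S) (x y a b : Fin n → R) (z c : R) :
    (clearedC x y a b z c).map φ = clearedC (φ ∘ x) (φ ∘ y) (φ ∘ a) (φ ∘ b) (φ z) (φ c) := by
  ext (i | _) (j | _) <;> simp [clearedC, pfunNum, map_prod]

inductive Var (n : ℕ) : Type
  | x (i : Fin n)
  | y (i : Fin n)
  | a (i : Fin n)
  | b (i : Fin n)
  | z
  | c

def Var.elim (x y a b : Fin n → R) (z c : R) : Var n → R
  | .x i => x i
  | .y i => y i
  | .a i => a i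
  | .b i => b i
  | .z => z
  | .c => c

lemma okadaFactor_X_ne_zero :
    okadaFactor (fun i => .X (.y i)) (fun i => .X (.b i)) (.X .z : MvPolynomial (Var n) ℤ) ≠ 0 := by
  have hX {u v : Var n} (h : u ≠ v) :
      (MvPolynomial.X u - MvPolynomial.X v : MvPolynomial (Var n) ℤ) ≠ 0 :=
    sub_ne_zero.2 (MvPolynomial.X_injective.ne h)
  have hone {p : MvPolynomial (Var n) ℤ} (hp : MvPolynomial.constantCoeff p = 0) : 1 - p ≠ 0 :=
    fun h => by simpa [hp] using congrArg MvPolynomial.constantCoeff h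
  have hsep (m : Fin n) : sepProd (fun i => .X (.y i) : Fin n → MvPolynomial (Var n) ℤ) m ≠ 0 :=
    prod_ne_zero_iff.2 fun k hk =>
      mul_ne_zero (hX (by simpa using (ne_of_mem_erase hk).symm)) (hone (by simp))
  refine mul_ne_zero (mul_ne_zero (prod_ne_zero_iff.2 fun m _ => ?_) ?_)
    (prod_ne_zero_iff.2 fun m _ => ?_)
  · exact mul_ne_zero (mul_ne_zero (mul_ne_zero (hX (by simp)) (hone (by simp))) (hone (by simp)))
      (hsep m)
  · rw [eval_pairProd]
    exact prod_ne_zero_iff.2 fun k _ => mul_ne_zero (hX (by simp)) (hone (by simp))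
  · exact mul_ne_zero (hone (by simp))
      (mul_ne_zero (mul_ne_zero (hX (by simp)) (hone (by simp))) (hsep m))

theorem det_okadaV (x y a b : Fin n → R) (z c : R) :
    (okadaV x y a b z c).det = (-1) ^ n * (clearedC x y a b z c).det := by
  have generic : (okadaV (fun i => .X (.x i)) (fun i => .X (.y i)) (fun i => .X (.a i))
      (fun i => .X (.b i)) (.X .z) (.X .c : MvPolynomial (Var n) ℤ)).det
      = (-1) ^ n * (clearedC (fun i => .X (.x i)) (fun i => .X (.y i)) (fun i => .X (.a i))
      (fun i => .X (.b i)) (.X .z) (.X .c : MvPolynomial (Var n) ℤ)).det :=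
    mul_right_cancel₀ okadaFactor_X_ne_zero (det_okadaV_mul_okadaFactor _ _ _ _ _ _)
  have h := congrArg (MvPolynomial.eval₂Hom (Int.castRingHom R) (Var.elim x y a b z c)) generic
  rw [RingHom.map_mul, RingHom.map_pow, RingHom.map_neg, RingHom.map_one, RingHom.map_det,
    RingHom.map_det, RingHom.mapMatrix_apply, RingHom.mapMatrix_apply, map_okadaV,
    map_clearedC] at h
  simpa [Function.comp_def, Var.elim] using h

end Specialization

section Field

variable {K : Type*} [Field K] {n : ℕ} (x y a b : Fin n → K) (z c : K)

def okadaC : Matrix (Fin (n + 1)) (Fin (n + 1)) K :=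
  Matrix.of fun i j : Fin (n + 1) =>
    if hi : (i : ℕ) < n then
      if hj : (j : ℕ) < n then pfun (x ⟨i, hi⟩) (y ⟨j, hj⟩) z (a ⟨i, hi⟩) (b ⟨j, hj⟩)
      else 1 - a ⟨i, hi⟩
    else
      if hj : (j : ℕ) < n then 1 - b ⟨j, hj⟩
      else (1 - c) / (1 - z ^ 2)

lemma pfun_mul_eq_pfunNum {x y z a b : K} (hxy : x ≠ y) (hxy1 : x * y ≠ 1) :
    pfun x y z a b * ((x - y) * (1 - y * x)) = pfunNum x y z a b := by
  have h₁ : x - y ≠ 0 := sub_ne_zero.2 hxy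
  have h₂ : 1 - x * y ≠ 0 := sub_ne_zero.2 hxy1.symm
  rw [pfun, pfunNum, mul_comm y x]
  field_simp

lemma okadaC_submatrix_finSumFinEquiv :
    (okadaC x y a b z c).submatrix finSumFinEquiv finSumFinEquiv
      = fromBlocks (of fun i j => pfun (x i) (y j) z (a i) (b j)) (of fun i _ => 1 - a i)
          (of fun _ j => 1 - b j) (of fun _ _ => (1 - c) / (1 - z ^ 2)) := by
  ext (i | _) (j | _) <;> simp [okadaC]

lemma det_clearedC (hz : z ^ 2 ≠ 1) (hxy : ∀ i j, x i ≠ y j) (hxy1 : ∀ i j, x i * y j ≠ 1) :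
    (clearedC x y a b z c).det
      = ((1 - z ^ 2) * ∏ i, ∏ j, (x i - y j) * (1 - x i * y j)) * (okadaC x y a b z c).det := by
  have hz' : (1 : K) - z ^ 2 ≠ 0 := sub_ne_zero.2 (Ne.symm hz)
  have h : clearedC x y a b z c
      = of fun p q => Sum.elim (fun i => ∏ k, (x i - y k) * (1 - y k * x i)) (fun _ => 1 - z ^ 2) p
          * (okadaC x y a b z c).submatrix finSumFinEquiv finSumFinEquiv p q := by
    rw [okadaC_submatrix_finSumFinEquiv]
    ext (i | _) (j | _)
    · simp only [clearedC, fromBlocks_apply₁₁, of_apply, Sum.elim_inl]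
      rw [← mul_prod_erase univ (fun k => (x i - y k) * (1 - y k * x i)) (mem_univ j),
        ← pfun_mul_eq_pfunNum (hxy i j) (hxy1 i j)]
      ring
    · simp [clearedC, mul_comm]
    · simp [clearedC]
    · simp [clearedC, mul_div_cancel₀ _ hz']
  rw [h, det_mul_column, det_submatrix_equiv_self, Fintype.prod_sum_type]
  simp only [Sum.elim_inl, Sum.elim_inr, Fin.prod_univ_one, mul_comm (y _) (x _)]
  ring

theorem det_okadaC (hz : z ^ 2 ≠ 1) (hxy : ∀ i j, x i ≠ y j) (hxy1 : ∀ i j, x i * y j ≠ 1) :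
    (okadaC x y a b z c).det = (-1) ^ n * (okadaV x y a b z c).det
      / ((1 - z ^ 2) * ∏ i, ∏ j, (x i - y j) * (1 - x i * y j)) := by
  have hz' : (1 : K) - z ^ 2 ≠ 0 := sub_ne_zero.2 (Ne.symm hz)
  have hprod : ∏ i, ∏ j, (x i - y j) * (1 - x i * y j) ≠ 0 :=
    prod_ne_zero_iff.2 fun i _ => prod_ne_zero_iff.2 fun j _ =>
      mul_ne_zero (sub_ne_zero.2 (hxy i j)) (sub_ne_zero.2 (hxy1 i j).symm)
  rw [det_okadaV, det_clearedC x y a b z c hz hxy hxy1, ← mul_assoc, ← mul_pow, neg_one_mul,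
    neg_neg, one_pow, one_mul, mul_div_cancel_left₀ _ (mul_ne_zero hz' hprod)]

end Field

end Okada

end

/-- Okada's Lemma 3.2: `det C = (−1)^n · det V / ((1−z²) ∏_{i,j}(x_i−y_j)(1−x_i y_j))`. -/
theorem det_C_eq_det_V {K : Type*} [Field K] (n : ℕ) (x y a b : Fin n → K) (z c : K)
    (hz : z ^ 2 ≠ 1)
    (hxy : ∀ i j, x i ≠ y j) (hxy1 : ∀ i j, x i * y j ≠ 1) :
    (Matrix.of fun i j : Fin (n + 1) =>
        if hi : (i : ℕ) < n then
          if hj : (j : ℕ) < n then pfun (x ⟨i, hi⟩) (y ⟨j, hj⟩) z (a ⟨i, hi⟩) (b ⟨j, hj⟩)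
          else 1 - a ⟨i, hi⟩
        else
          if hj : (j : ℕ) < n then 1 - b ⟨j, hj⟩
          else (1 - c) / (1 - z ^ 2)).det
      = (-1 : K) ^ n *
          (Matrix.of fun i j : Fin (2 * n + 1) =>
            if h : (i : ℕ) < n then
              x ⟨i, h⟩ ^ (j : ℕ) - a ⟨i, h⟩ * x ⟨i, h⟩ ^ (2 * n - (j : ℕ))
            else if h2 : (i : ℕ) < 2 * n then
              y ⟨(i : ℕ) - n, by omega⟩ ^ (j : ℕ)
                - b ⟨(i : ℕ) - n, by omega⟩ * y ⟨(i : ℕ) - n, by omega⟩ ^ (2 * n - (j : ℕ))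
            else z ^ (j : ℕ) - c * z ^ (2 * n - (j : ℕ))).det /
          ((1 - z ^ 2) * ∏ i, ∏ j, (x i - y j) * (1 - x i * y j)) := by
  convert Okada.det_okadaC x y a b z c hz hxy hxy1 using 4
  · rfl
  ext i k
  obtain ⟨r, rfl⟩ := (Okada.rowEquiv n).symm.surjective i
  rcases r with (i | u) | m
  · simp [Okada.okadaV, Okada.vRows, Okada.rowsMatrix, Okada.evalSubReflectMatrix,
      Okada.val_rowEquiv_symm_inl_inl]
  · simp [Okada.okadaV, Okada.vRows, Okada.rowsMatrix, Okada.evalSubReflectMatrix,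
      Okada.val_rowEquiv_symm_inl_inr, show ¬ 2 * n < n by omega]
  · simp [Okada.okadaV, Okada.vRows, Okada.rowsMatrix, Okada.evalSubReflectMatrix,
      Okada.val_rowEquiv_symm_inr, show n + (m : ℕ) < 2 * n by omega]
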